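/- arXiv:2512.17830 — 2 statements merged into one kernel-verified Lean document; each statement's English description precedes it below -/
import Mathlib

section
/- Let p ∈ ℂ* and s ∈ ℂ*. Let R = [[1,0,0,0],[0,0,p,0],[0,1/p,0,0],[0,0,0,−1]] and S = [[1,0,0,0],[0,0,s,0],[0,1/s,0,0],[0,0,0,ε]] with ε ∈ {1,−1}. Then R² = S² = I₄, both satisfy the braid equation, and the mixed relations R₁R₂S₁ = S₂R₁R₂ and R₁S₂S₁ = S₂S₁R₂ hold (X₁ = X⊗I₂, X₂ = I₂⊗X). -/
open Matrix Complex

abbrev V2 : Type := Fin 2 × Fin 2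
abbrev V3 : Type := Fin 2 × Fin 2 × Fin 2

/-- identify the pair `(i,j)` with `2*i+j` (lexicographic basis `e₁₁,e₁₂,e₂₁,e₂₂`). -/
def toFin4 (p : V2) : Fin 4 := ⟨2 * p.1.val + p.2.val, by omega⟩

/-- view a 4×4 matrix as an operator on `ℂ² ⊗ ℂ²`. -/
def lift4 (M : Matrix (Fin 4) (Fin 4) ℂ) : Matrix V2 V2 ℂ :=
  fun i j => M (toFin4 i) (toFin4 j)

/-- `M ⊗ I₂` : `M` acting on the first two tensor factors of `ℂ²⊗ℂ²⊗ℂ²`. -/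
def amp1 (M : Matrix V2 V2 ℂ) : Matrix V3 V3 ℂ :=
  fun i j => M (i.1, i.2.1) (j.1, j.2.1) * (if i.2.2 = j.2.2 then 1 else 0)

/-- `I₂ ⊗ M` : `M` acting on the last two tensor factors of `ℂ²⊗ℂ²⊗ℂ²`. -/
def amp2 (M : Matrix V2 V2 ℂ) : Matrix V3 V3 ℂ :=
  fun i j => (if i.1 = j.1 then (1:ℂ) else 0) * M (i.2.1, i.2.2) (j.2.1, j.2.2)

/-- the constant Yang–Baxter (braid) equation `R₁R₂R₁ = R₂R₁R₂`. -/
def Braid (M : Matrix V2 V2 ℂ) : Prop :=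
  amp1 M * amp2 M * amp1 M = amp2 M * amp1 M * amp2 M


private noncomputable def Mm (a : ℂ) (d : ℂ) : Matrix V2 V2 ℂ := fun i j =>
  if i = (0,0) ∧ j = (0,0) then 1 else
  if i = (0,1) ∧ j = (1,0) then a else
  if i = (1,0) ∧ j = (0,1) then 1/a else
  if i = (1,1) ∧ j = (1,1) then d else 0

private lemma lift4_eq (a d : ℂ) :
    lift4 !![1,0,0,0; 0,0,a,0; 0,1/a,0,0; 0,0,0,d] = Mm a d := by
  funext i j
  obtain ⟨i1, i2⟩ := i; obtain ⟨j1, j2⟩ := j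
  fin_cases i1 <;> fin_cases i2 <;> fin_cases j1 <;> fin_cases j2 <;>
    simp [lift4, toFin4, Mm, Prod.ext_iff, Matrix.vecHead, Matrix.vecTail]

set_option maxHeartbeats 2000000 in
theorem aslash_pair_MD_relations (p s ε : ℂ) (hp : p ≠ 0) (hs : s ≠ 0)
    (hε : ε = 1 ∨ ε = -1) :
    let R := lift4 !![1,0,0,0; 0,0,p,0; 0,1/p,0,0; 0,0,0,-1]
    let S := lift4 !![1,0,0,0; 0,0,s,0; 0,1/s,0,0; 0,0,0,ε]
    R * R = 1 ∧ S * S = 1 ∧ Braid R ∧ Braid S ∧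
    amp1 R * amp2 R * amp1 S = amp2 S * amp1 R * amp2 R ∧
    amp1 R * amp2 S * amp1 S = amp2 S * amp1 S * amp2 R := by
  intro R S
  show _ ∧ _ ∧ _ ∧ _ ∧ _ ∧ _
  rw [show R = Mm p (-1) from lift4_eq p (-1), show S = Mm s ε from lift4_eq s ε]
  have hε2 : ε * ε = 1 := by rcases hε with h|h <;> subst h <;> ring
  have h1 : p * p⁻¹ = 1 := mul_inv_cancel₀ hp
  have h2 : p⁻¹ * p = 1 := inv_mul_cancel₀ hp
  have h3 : s * s⁻¹ = 1 := mul_inv_cancel₀ hs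
  have h4 : s⁻¹ * s = 1 := inv_mul_cancel₀ hs
  refine ⟨?_, ?_, ?_, ?_, ?_, ?_⟩
  · rw [← Matrix.ext_iff]
    simp only [Prod.forall, Fin.forall_fin_two, Matrix.mul_apply, Fintype.sum_prod_type,
      Fin.sum_univ_two, Mm, Prod.mk.injEq, Matrix.one_apply]
    norm_num [h1, h2]
  · rw [← Matrix.ext_iff]
    simp only [Prod.forall, Fin.forall_fin_two, Matrix.mul_apply, Fintype.sum_prod_type,
      Fin.sum_univ_two, Mm, Prod.mk.injEq, Matrix.one_apply]
    norm_num [h3, h4, hε2]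
  · rw [Braid, ← Matrix.ext_iff]
    simp only [Prod.forall, Fin.forall_fin_two, Matrix.mul_apply, Fintype.sum_prod_type,
      Fin.sum_univ_two, amp1, amp2, Mm, Prod.mk.injEq]
    norm_num [h1, h2, mul_comm, mul_left_comm, mul_assoc]
  · rw [Braid, ← Matrix.ext_iff]
    simp only [Prod.forall, Fin.forall_fin_two, Matrix.mul_apply, Fintype.sum_prod_type,
      Fin.sum_univ_two, amp1, amp2, Mm, Prod.mk.injEq]
    norm_num [h3, h4, hε2, mul_comm, mul_left_comm, mul_assoc]
  · rw [← Matrix.ext_iff]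
    simp only [Prod.forall, Fin.forall_fin_two, Matrix.mul_apply, Fintype.sum_prod_type,
      Fin.sum_univ_two, amp1, amp2, Mm, Prod.mk.injEq]
    norm_num [h1, h2, h3, h4, hε2, mul_comm, mul_left_comm, mul_assoc]
  · rw [← Matrix.ext_iff]
    simp only [Prod.forall, Fin.forall_fin_two, Matrix.mul_apply, Fintype.sum_prod_type,
      Fin.sum_univ_two, amp1, amp2, Mm, Prod.mk.injEq]
    norm_num [h1, h2, h3, h4, hε2, mul_comm, mul_left_comm, mul_assoc]
end

section
/- Let s ∈ ℂ*, ε ∈ {1,−1}. Let R = [[1,0,0,0],[0,0,−1,0],[0,−1,0,0],[0,0,0,1]] and S = [[0,0,0,s],[0,ε,0,0],[0,0,ε,0],[1/s,0,0,0]]. Then R² = S² = I₄, both satisfy the braid equation, and the mixed relations R₁R₂S₁ = S₂R₁R₂ and R₁S₂S₁ = S₂S₁R₂ hold (X₁ = X⊗I₂, X₂ = I₂⊗X). Moreover X = RS has eigenvalues among {1,−1} and X² = I₄. -/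
open Matrix Complex

lemma amp_entry_121 (A B C : Matrix V2 V2 ℂ) (i j : V3) :
    (amp1 A * amp2 B * amp1 C) i j =
    ∑ l1 : Fin 2, ∑ l2 : Fin 2, ∑ k2 : Fin 2,
      A (i.1, i.2.1) (l1, k2) * B (k2, i.2.2) (l2, j.2.2) * C (l1, l2) (j.1, j.2.1) := by
  simp [Matrix.mul_apply, amp1, amp2, Fintype.sum_prod_type, Fin.sum_univ_two,
    Finset.mul_sum, Finset.sum_mul]
  ring

lemma amp_entry_212 (A B C : Matrix V2 V2 ℂ) (i j : V3) :
    (amp2 A * amp1 B * amp2 C) i j =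
    ∑ l2 : Fin 2, ∑ l3 : Fin 2, ∑ k2 : Fin 2,
      A (i.2.1, i.2.2) (k2, l3) * B (i.1, k2) (j.1, l2) * C (l2, l3) (j.2.1, j.2.2) := by
  simp [Matrix.mul_apply, amp1, amp2, Fintype.sum_prod_type, Fin.sum_univ_two,
    Finset.mul_sum, Finset.sum_mul]
  ring

lemma f2 (i : Fin 2) : i = 0 ∨ i = 1 := by omega

noncomputable def Rm : Matrix V2 V2 ℂ := lift4 !![1,0,0,0; 0,0,-1,0; 0,-1,0,0; 0,0,0,1]
noncomputable def Sm (s ε : ℂ) : Matrix V2 V2 ℂ := lift4 !![0,0,0,s; 0,ε,0,0; 0,0,ε,0; 1/s,0,0,0]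

lemma Rm_0000 : Rm (0,0) (0,0) = 1 := rfl
lemma Rm_0001 : Rm (0,0) (0,1) = 0 := rfl
lemma Rm_0010 : Rm (0,0) (1,0) = 0 := rfl
lemma Rm_0011 : Rm (0,0) (1,1) = 0 := rfl
lemma Rm_0100 : Rm (0,1) (0,0) = 0 := rfl
lemma Rm_0101 : Rm (0,1) (0,1) = 0 := rfl
lemma Rm_0110 : Rm (0,1) (1,0) = -1 := rfl
lemma Rm_0111 : Rm (0,1) (1,1) = 0 := rfl
lemma Rm_1000 : Rm (1,0) (0,0) = 0 := rfl
lemma Rm_1001 : Rm (1,0) (0,1) = -1 := rfl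
lemma Rm_1010 : Rm (1,0) (1,0) = 0 := rfl
lemma Rm_1011 : Rm (1,0) (1,1) = 0 := rfl
lemma Rm_1100 : Rm (1,1) (0,0) = 0 := rfl
lemma Rm_1101 : Rm (1,1) (0,1) = 0 := rfl
lemma Rm_1110 : Rm (1,1) (1,0) = 0 := rfl
lemma Rm_1111 : Rm (1,1) (1,1) = 1 := rfl
lemma Sm_0000 (s ε : ℂ) : Sm s ε (0,0) (0,0) = 0 := rfl
lemma Sm_0001 (s ε : ℂ) : Sm s ε (0,0) (0,1) = 0 := rfl
lemma Sm_0010 (s ε : ℂ) : Sm s ε (0,0) (1,0) = 0 := rfl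
lemma Sm_0011 (s ε : ℂ) : Sm s ε (0,0) (1,1) = s := rfl
lemma Sm_0100 (s ε : ℂ) : Sm s ε (0,1) (0,0) = 0 := rfl
lemma Sm_0101 (s ε : ℂ) : Sm s ε (0,1) (0,1) = ε := rfl
lemma Sm_0110 (s ε : ℂ) : Sm s ε (0,1) (1,0) = 0 := rfl
lemma Sm_0111 (s ε : ℂ) : Sm s ε (0,1) (1,1) = 0 := rfl
lemma Sm_1000 (s ε : ℂ) : Sm s ε (1,0) (0,0) = 0 := rfl
lemma Sm_1001 (s ε : ℂ) : Sm s ε (1,0) (0,1) = 0 := rfl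
lemma Sm_1010 (s ε : ℂ) : Sm s ε (1,0) (1,0) = ε := rfl
lemma Sm_1011 (s ε : ℂ) : Sm s ε (1,0) (1,1) = 0 := rfl
lemma Sm_1100 (s ε : ℂ) : Sm s ε (1,1) (0,0) = 1/s := rfl
lemma Sm_1101 (s ε : ℂ) : Sm s ε (1,1) (0,1) = 0 := rfl
lemma Sm_1110 (s ε : ℂ) : Sm s ε (1,1) (1,0) = 0 := rfl
lemma Sm_1111 (s ε : ℂ) : Sm s ε (1,1) (1,1) = 0 := rfl

lemma spec_sq (X : Matrix V2 V2 ℂ) (h : X * X = 1) :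
    ∀ c ∈ spectrum ℂ X, c = 1 ∨ c = -1 := by
  intro c hc
  by_contra hcon
  push_neg at hcon
  rw [spectrum.mem_iff] at hc
  apply hc
  have key : (algebraMap ℂ (Matrix V2 V2 ℂ) c - X) * (algebraMap ℂ (Matrix V2 V2 ℂ) c + X)
      = algebraMap ℂ (Matrix V2 V2 ℂ) (c^2 - 1) := by
    simp only [Algebra.algebraMap_eq_smul_one, sub_mul, mul_add, Matrix.smul_mul,
      Matrix.mul_smul, one_mul, mul_one, h, smul_smul, pow_two, sub_smul, one_smul]
    abel
  have h1 : c^2 - 1 ≠ 0 := by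
    intro h0
    have : (c - 1) * (c + 1) = 0 := by linear_combination h0
    rcases mul_eq_zero.mp this with h' | h'
    · exact hcon.1 (by linear_combination h')
    · exact hcon.2 (by linear_combination h')
  have hdet : IsUnit ((algebraMap ℂ (Matrix V2 V2 ℂ) c - X) * (algebraMap ℂ (Matrix V2 V2 ℂ) c + X)) := by
    rw [key]
    exact (isUnit_iff_ne_zero.mpr h1).map (algebraMap ℂ (Matrix V2 V2 ℂ))
  rw [Matrix.isUnit_iff_isUnit_det] at hdet ⊢
  rw [Matrix.det_mul] at hdet
  exact isUnit_of_mul_isUnit_left hdet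

lemma RR : Rm * Rm = 1 := by
  ext ⟨a,b⟩ ⟨c,d⟩
  simp only [Matrix.mul_apply, Fintype.sum_prod_type, Fin.sum_univ_two]
  rcases f2 a with rfl|rfl <;> rcases f2 b with rfl|rfl <;>
    rcases f2 c with rfl|rfl <;> rcases f2 d with rfl|rfl <;>
    simp only [Rm_0000, Rm_0001, Rm_0010, Rm_0011, Rm_0100, Rm_0101, Rm_0110, Rm_0111, Rm_1000, Rm_1001, Rm_1010, Rm_1011, Rm_1100, Rm_1101, Rm_1110, Rm_1111, Sm_0000, Sm_0001, Sm_0010, Sm_0011, Sm_0100, Sm_0101, Sm_0110, Sm_0111, Sm_1000, Sm_1001, Sm_1010, Sm_1011, Sm_1100, Sm_1101, Sm_1110, Sm_1111] <;>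
    norm_num [Matrix.one_apply, Prod.ext_iff]

lemma SS (s ε : ℂ) (hs : s ≠ 0) (hε : ε = 1 ∨ ε = -1) : Sm s ε * Sm s ε = 1 := by
  rcases hε with rfl | rfl <;>
  · ext ⟨a,b⟩ ⟨c,d⟩
    simp only [Matrix.mul_apply, Fintype.sum_prod_type, Fin.sum_univ_two]
    rcases f2 a with rfl|rfl <;> rcases f2 b with rfl|rfl <;>
      rcases f2 c with rfl|rfl <;> rcases f2 d with rfl|rfl <;>
      simp only [Rm_0000, Rm_0001, Rm_0010, Rm_0011, Rm_0100, Rm_0101, Rm_0110, Rm_0111, Rm_1000, Rm_1001, Rm_1010, Rm_1011, Rm_1100, Rm_1101, Rm_1110, Rm_1111, Sm_0000, Sm_0001, Sm_0010, Sm_0011, Sm_0100, Sm_0101, Sm_0110, Sm_0111, Sm_1000, Sm_1001, Sm_1010, Sm_1011, Sm_1100, Sm_1101, Sm_1110, Sm_1111] <;>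
      norm_num [Matrix.one_apply, Prod.ext_iff] <;> (try field_simp)

lemma XX (s ε : ℂ) (hs : s ≠ 0) (hε : ε = 1 ∨ ε = -1) :
    (Rm * Sm s ε) * (Rm * Sm s ε) = 1 := by
  rcases hε with rfl | rfl <;>
  · ext ⟨a,b⟩ ⟨c,d⟩
    simp only [Matrix.mul_apply, Fintype.sum_prod_type, Fin.sum_univ_two]
    rcases f2 a with rfl|rfl <;> rcases f2 b with rfl|rfl <;>
      rcases f2 c with rfl|rfl <;> rcases f2 d with rfl|rfl <;>
      simp only [Rm_0000, Rm_0001, Rm_0010, Rm_0011, Rm_0100, Rm_0101, Rm_0110, Rm_0111, Rm_1000, Rm_1001, Rm_1010, Rm_1011, Rm_1100, Rm_1101, Rm_1110, Rm_1111, Sm_0000, Sm_0001, Sm_0010, Sm_0011, Sm_0100, Sm_0101, Sm_0110, Sm_0111, Sm_1000, Sm_1001, Sm_1010, Sm_1011, Sm_1100, Sm_1101, Sm_1110, Sm_1111] <;>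
      norm_num [Matrix.one_apply, Prod.ext_iff] <;> (try field_simp)

lemma BraidR : Braid Rm := by
  unfold Braid
  ext ⟨i1,i2,i3⟩ ⟨j1,j2,j3⟩
  rw [amp_entry_121, amp_entry_212]
  simp only [Fin.sum_univ_two]
  rcases f2 i1 with rfl|rfl <;> rcases f2 i2 with rfl|rfl <;> rcases f2 i3 with rfl|rfl <;>
    rcases f2 j1 with rfl|rfl <;> rcases f2 j2 with rfl|rfl <;> rcases f2 j3 with rfl|rfl <;>
    simp only [Rm_0000, Rm_0001, Rm_0010, Rm_0011, Rm_0100, Rm_0101, Rm_0110, Rm_0111, Rm_1000, Rm_1001, Rm_1010, Rm_1011, Rm_1100, Rm_1101, Rm_1110, Rm_1111, Sm_0000, Sm_0001, Sm_0010, Sm_0011, Sm_0100, Sm_0101, Sm_0110, Sm_0111, Sm_1000, Sm_1001, Sm_1010, Sm_1011, Sm_1100, Sm_1101, Sm_1110, Sm_1111] <;>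
    norm_num <;> (try field_simp) <;> (try ring)

lemma BraidS (s ε : ℂ) (hs : s ≠ 0) (hε : ε = 1 ∨ ε = -1) : Braid (Sm s ε) := by
  unfold Braid
  rcases hε with rfl | rfl <;>
  · ext ⟨i1,i2,i3⟩ ⟨j1,j2,j3⟩
    rw [amp_entry_121, amp_entry_212]
    simp only [Fin.sum_univ_two]
    rcases f2 i1 with rfl|rfl <;> rcases f2 i2 with rfl|rfl <;> rcases f2 i3 with rfl|rfl <;>
      rcases f2 j1 with rfl|rfl <;> rcases f2 j2 with rfl|rfl <;> rcases f2 j3 with rfl|rfl <;>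
      simp only [Rm_0000, Rm_0001, Rm_0010, Rm_0011, Rm_0100, Rm_0101, Rm_0110, Rm_0111, Rm_1000, Rm_1001, Rm_1010, Rm_1011, Rm_1100, Rm_1101, Rm_1110, Rm_1111, Sm_0000, Sm_0001, Sm_0010, Sm_0011, Sm_0100, Sm_0101, Sm_0110, Sm_0111, Sm_1000, Sm_1001, Sm_1010, Sm_1011, Sm_1100, Sm_1101, Sm_1110, Sm_1111] <;>
      norm_num <;> (try field_simp) <;> (try ring)

lemma Mixed1 (s ε : ℂ) (hs : s ≠ 0) (hε : ε = 1 ∨ ε = -1) :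
    amp1 Rm * amp2 Rm * amp1 (Sm s ε) = amp2 (Sm s ε) * amp1 Rm * amp2 Rm := by
  rcases hε with rfl | rfl <;>
  · ext ⟨i1,i2,i3⟩ ⟨j1,j2,j3⟩
    rw [amp_entry_121, amp_entry_212]
    simp only [Fin.sum_univ_two]
    rcases f2 i1 with rfl|rfl <;> rcases f2 i2 with rfl|rfl <;> rcases f2 i3 with rfl|rfl <;>
      rcases f2 j1 with rfl|rfl <;> rcases f2 j2 with rfl|rfl <;> rcases f2 j3 with rfl|rfl <;>
      simp only [Rm_0000, Rm_0001, Rm_0010, Rm_0011, Rm_0100, Rm_0101, Rm_0110, Rm_0111, Rm_1000, Rm_1001, Rm_1010, Rm_1011, Rm_1100, Rm_1101, Rm_1110, Rm_1111, Sm_0000, Sm_0001, Sm_0010, Sm_0011, Sm_0100, Sm_0101, Sm_0110, Sm_0111, Sm_1000, Sm_1001, Sm_1010, Sm_1011, Sm_1100, Sm_1101, Sm_1110, Sm_1111] <;>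
      norm_num <;> (try field_simp) <;> (try ring)

lemma Mixed2 (s ε : ℂ) (hs : s ≠ 0) (hε : ε = 1 ∨ ε = -1) :
    amp1 Rm * amp2 (Sm s ε) * amp1 (Sm s ε) = amp2 (Sm s ε) * amp1 (Sm s ε) * amp2 Rm := by
  rcases hε with rfl | rfl <;>
  · ext ⟨i1,i2,i3⟩ ⟨j1,j2,j3⟩
    rw [amp_entry_121, amp_entry_212]
    simp only [Fin.sum_univ_two]
    rcases f2 i1 with rfl|rfl <;> rcases f2 i2 with rfl|rfl <;> rcases f2 i3 with rfl|rfl <;>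
      rcases f2 j1 with rfl|rfl <;> rcases f2 j2 with rfl|rfl <;> rcases f2 j3 with rfl|rfl <;>
      simp only [Rm_0000, Rm_0001, Rm_0010, Rm_0011, Rm_0100, Rm_0101, Rm_0110, Rm_0111, Rm_1000, Rm_1001, Rm_1010, Rm_1011, Rm_1100, Rm_1101, Rm_1110, Rm_1111, Sm_0000, Sm_0001, Sm_0010, Sm_0011, Sm_0100, Sm_0101, Sm_0110, Sm_0111, Sm_1000, Sm_1001, Sm_1010, Sm_1011, Sm_1100, Sm_1101, Sm_1110, Sm_1111] <;>
      norm_num <;> (try field_simp) <;> (try ring)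

theorem fslash_pminus1_pair_MD_relations (s ε : ℂ) (hs : s ≠ 0)
    (hε : ε = 1 ∨ ε = -1) :
    let R := lift4 !![1,0,0,0; 0,0,-1,0; 0,-1,0,0; 0,0,0,1]
    let S := lift4 !![0,0,0,s; 0,ε,0,0; 0,0,ε,0; 1/s,0,0,0]
    let X := R * S
    R * R = 1 ∧ S * S = 1 ∧ Braid R ∧ Braid S ∧
    amp1 R * amp2 R * amp1 S = amp2 S * amp1 R * amp2 R ∧
    amp1 R * amp2 S * amp1 S = amp2 S * amp1 S * amp2 R ∧
    X * X = 1 ∧ (∀ c ∈ spectrum ℂ X, c = 1 ∨ c = -1) := by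
  intro R S X
  have hR : R = Rm := rfl
  have hS : S = Sm s ε := rfl
  have hX : X = Rm * Sm s ε := rfl
  rw [hR, hS, hX]
  exact ⟨RR, SS s ε hs hε, BraidR, BraidS s ε hs hε, Mixed1 s ε hs hε, Mixed2 s ε hs hε,
    XX s ε hs hε, spec_sq _ (XX s ε hs hε)⟩
end
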